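/- arXiv:2410.20902 — 2 statements merged into one kernel-verified Lean document; each statement's English description precedes it below -/
import Mathlib

section
/- Let K be a positive integer, let L̃_1, …, L̃_K be positive integers with L̃_1 ∣ L̃_2, …, L̃_{K−1} ∣ L̃_K, and let v_0, v_1, …, v_K be positive reals. Define h_1 : ℝ^{L̃_1} × ℝ → ℝ by h_1(y; m) = ∫_ℝ φ(m_0; m, v_1) · Π_{i=1}^{L̃_1} φ(y_i; m_0, v_0) dm_0, and recursively for 2 ≤ k ≤ K define h_k : ℝ^{L̃_k} × ℝ → ℝ by h_k(y; m) = ∫_ℝ φ(m'; m, v_k) · Π_{j=1}^{L̃_k/L̃_{k−1}} h_{k−1}(y^{(j)}; m') dm', where y^{(j)} denotes the j-th consecutive block of length L̃_{k−1} of y. Then for every μ ∈ ℝ and every x ∈ ℝ^{L̃_K}, h_K(x; μ) = (2π)^{−L̃_K/2} · det(Σ)^{−1/2} · exp(−(1/2)·(x − μ·1)ᵀ Σ^{−1} (x − μ·1)), where 1 ∈ ℝ^{L̃_K} is the all-ones vector and Σ = v_0·I_{L̃_K} + v_K·J_{L̃_K} + Σ_{k=1}^{K−1} v_k·(I_{L̃_K/L̃_k}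 ⊗ J_{L̃_k}). -/
open Matrix Finset MeasureTheory Real

/-- The univariate Gaussian density `φ(x; m, v) = (2πv)^{−1/2}·exp(−(x − m)²/(2v))`. -/
noncomputable def gaussPdf (x m v : ℝ) : ℝ :=
  (Real.sqrt (2 * Real.pi * v))⁻¹ * Real.exp (-(x - m) ^ 2 / (2 * v))

/-- The recursively-defined Gaussian smoothing functions `h_k` (`y` is given as a
function on `ℕ`, of which only the first `L̃_k` entries are used):
`h_1(y; m) = ∫ φ(m₀; m, v₁)·Π_{i<L̃_1} φ(y_i; m₀, v₀) dm₀` and, for `k ≥ 2`,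
`h_k(y; m) = ∫ φ(m'; m, v_k)·Π_{j<L̃_k/L̃_{k−1}} h_{k−1}(y⁽ʲ⁾; m') dm'`, where
`y⁽ʲ⁾` is the `j`-th consecutive block of length `L̃_{k−1}` of `y`. -/
noncomputable def krsbSmooth (L : ℕ → ℕ) (v : ℕ → ℝ) : ℕ → (ℕ → ℝ) → ℝ → ℝ
  | 0 => fun _ _ => 0
  | 1 => fun y m =>
      ∫ m0 : ℝ, gaussPdf m0 m (v 1) * ∏ i ∈ Finset.range (L 1), gaussPdf (y i) m0 (v 0)
  | (k + 2) => fun y m =>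
      ∫ m' : ℝ, gaussPdf m' m (v (k + 2)) *
        ∏ j ∈ Finset.range (L (k + 2) / L (k + 1)),
          krsbSmooth L v (k + 1) (fun i => y (j * L (k + 1) + i)) m'

/-- The covariance matrix `Σ = v₀·I_{L̃_K} + v_K·J_{L̃_K} + Σ_{k=1}^{K−1} v_k·(I_{L̃_K/L̃_k} ⊗ J_{L̃_k})`,
written entrywise. -/
def krsbCov (K : ℕ) (L : ℕ → ℕ) (v : ℕ → ℝ) : Matrix (Fin (L K)) (Fin (L K)) ℝ :=
  Matrix.of fun i j =>
    (if i = j then v 0 else 0) + v K +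
      ∑ k ∈ Finset.Icc 1 (K - 1), (if (i : ℕ) / L k = (j : ℕ) / L k then v k else 0)

set_option linter.unusedSectionVars false
set_option linter.unnecessarySimpa false
set_option maxHeartbeats 1000000

lemma gaussPdf_symm (x m v : ℝ) : gaussPdf x m v = gaussPdf m x v := by
  unfold gaussPdf
  rw [show -(x - m)^2 = -(m - x)^2 by ring]

lemma integral_gaussPdf (m : ℝ) {v : ℝ} (hv : 0 < v) : ∫ x : ℝ, gaussPdf x m v = 1 := by
  have h : (fun x => gaussPdf x m v) = ProbabilityTheory.gaussianPDFReal m ⟨v, hv.le⟩ := by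
    ext x; rfl
  rw [h]
  refine ProbabilityTheory.integral_gaussianPDFReal_eq_one m ?_
  intro h0
  exact hv.ne' (congrArg NNReal.toReal h0)

lemma gaussPdf_mul {v w : ℝ} (hv : 0 < v) (hw : 0 < w) (t m a : ℝ) :
    gaussPdf t m v * gaussPdf t a w =
      gaussPdf a m (v + w) * gaussPdf t ((w * m + v * a) / (v + w)) (v * w / (v + w)) := by
  have hvw : 0 < v + w := by linarith
  unfold gaussPdf
  rw [mul_mul_mul_comm, mul_mul_mul_comm _ (Real.exp _), ← Real.exp_add, ← Real.exp_add,
    ← mul_inv, ← mul_inv, ← Real.sqrt_mul (by positivity), ← Real.sqrt_mul (by positivity)]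
  congr 2
  · field_simp
  · field_simp
    ring

lemma integral_gaussPdf_mul {v w : ℝ} (hv : 0 < v) (hw : 0 < w) (m a : ℝ) :
    ∫ t : ℝ, gaussPdf t m v * gaussPdf t a w = gaussPdf a m (v + w) := by
  have h : (fun t => gaussPdf t m v * gaussPdf t a w)
      = fun t => gaussPdf a m (v + w) *
          gaussPdf t ((w * m + v * a) / (v + w)) (v * w / (v + w)) := by
    ext t; exact gaussPdf_mul hv hw t m a
  rw [h, MeasureTheory.integral_const_mul, integral_gaussPdf _ (by positivity), mul_one]

lemma sqrt_inv_eq_rpow {x : ℝ} (hx : 0 < x) : (Real.sqrt x)⁻¹ = x ^ (-(1:ℝ)/2) := by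
  rw [Real.sqrt_eq_rpow, ← Real.rpow_neg hx.le]
  norm_num

lemma prod_gaussPdf {w : ℝ} (hw : 0 < w) {n : ℕ} (hn : 0 < n) (y : ℕ → ℝ) (t : ℝ) :
    ∏ i ∈ Finset.range n, gaussPdf (y i) t w =
      ((2 * π * w) ^ (-((n:ℝ) - 1)/2) * (n:ℝ) ^ (-(1:ℝ)/2) *
        Real.exp (-(1/2) * w⁻¹ *
          ((∑ i ∈ Finset.range n, (y i)^2) - (∑ i ∈ Finset.range n, y i)^2 / n))) *
      gaussPdf t ((∑ i ∈ Finset.range n, y i) / n) (w / n) := by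
  have hπ : (0:ℝ) < 2 * π * w := by positivity
  have hnR : (0:ℝ) < n := Nat.cast_pos.mpr hn
  set S := ∑ i ∈ Finset.range n, y i with hS
  unfold gaussPdf
  rw [Finset.prod_mul_distrib, Finset.prod_const, Finset.card_range, ← Real.exp_sum]
  have hc : ((Real.sqrt (2 * π * w))⁻¹) ^ n =
      (2 * π * w) ^ (-((n:ℝ) - 1)/2) * (n:ℝ) ^ (-(1:ℝ)/2)
        * (Real.sqrt (2 * π * (w / n)))⁻¹ := by
    rw [sqrt_inv_eq_rpow hπ, sqrt_inv_eq_rpow (by positivity),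
      show 2 * π * (w / n) = (2 * π * w) * (n:ℝ)⁻¹ by ring,
      Real.mul_rpow hπ.le (by positivity), ← Real.rpow_natCast ((2 * π * w) ^ (-(1:ℝ)/2)) n,
      ← Real.rpow_mul hπ.le]
    have h1 : ((n:ℝ)⁻¹) ^ (-(1:ℝ)/2) = (n:ℝ) ^ ((1:ℝ)/2) := by
      rw [← Real.rpow_neg_one (n:ℝ), ← Real.rpow_mul hnR.le]
      norm_num
    rw [h1, mul_mul_mul_comm, ← Real.rpow_add hπ, ← Real.rpow_add hnR,
      show (-(1:ℝ)/2 + 1/2) = 0 by ring, Real.rpow_zero, mul_one]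
    congr 1
    ring
  have he : (∑ i ∈ Finset.range n, -(y i - t) ^ 2 / (2 * w)) =
      (-(1/2) * w⁻¹ * ((∑ i ∈ Finset.range n, (y i)^2) - S^2 / n))
        + (-(t - S / n) ^ 2 / (2 * (w / n))) := by
    have hsq : ∑ i ∈ Finset.range n, (y i - t)^2
        = (∑ i ∈ Finset.range n, (y i)^2) - 2*t*S + n*t^2 := by
      simp only [sub_sq, Finset.sum_add_distrib, Finset.sum_sub_distrib, ← Finset.sum_mul,
        ← Finset.mul_sum, Finset.sum_const, Finset.card_range, nsmul_eq_mul, hS]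
      ring
    have : (∑ i ∈ Finset.range n, -(y i - t) ^ 2 / (2 * w))
        = -(∑ i ∈ Finset.range n, (y i - t)^2) / (2*w) := by
      rw [← Finset.sum_div, ← Finset.sum_neg_distrib]
    rw [this, hsq]
    field_simp
    ring
  rw [hc, he, Real.exp_add]
  ring


namespace KRSB

/-- block length at level `j`, with `Lb 0 = 1`. -/
def Lb (L : ℕ → ℕ) (j : ℕ) : ℕ := if j = 0 then 1 else L j

noncomputable def lam (L : ℕ → ℕ) (v : ℕ → ℝ) (k : ℕ) : ℝ :=
  ∑ j ∈ Finset.range (k + 1), v j * Lb L j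

/-- sum of the `b`-th block of length `l`. -/
noncomputable def bS (y : ℕ → ℝ) (l b : ℕ) : ℝ := ∑ i ∈ Finset.range l, y (b * l + i)

noncomputable def qq (L : ℕ → ℕ) (k j : ℕ) (y : ℕ → ℝ) : ℝ :=
  (∑ b ∈ Finset.range (Lb L k / Lb L j), (bS y (Lb L j) b) ^ 2) / Lb L j

noncomputable def rq (L : ℕ → ℕ) (v : ℕ → ℝ) (k : ℕ) (y : ℕ → ℝ) : ℝ :=
  ∑ j ∈ Finset.range k, (lam L v j)⁻¹ * (qq L k j y - qq L k (j + 1) y)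

noncomputable def avg (L : ℕ → ℕ) (k : ℕ) (y : ℕ → ℝ) : ℝ :=
  (∑ i ∈ Finset.range (Lb L k), y i) / Lb L k

noncomputable def gc (L : ℕ → ℕ) (v : ℕ → ℝ) (k : ℕ) : ℝ :=
  (2 * π) ^ (-((Lb L k : ℝ) - 1) / 2) * (Lb L k : ℝ) ^ (-(1:ℝ) / 2) *
    ∏ j ∈ Finset.range k, (lam L v j) ^
      (-(((Lb L k / Lb L j : ℕ) : ℝ) - ((Lb L k / Lb L (j + 1) : ℕ) : ℝ)) / 2)

lemma Lb_zero (L : ℕ → ℕ) : Lb L 0 = 1 := rfl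

lemma Lb_eq (L : ℕ → ℕ) {j : ℕ} (hj : 1 ≤ j) : Lb L j = L j := if_neg (by omega)

section
variable {K : ℕ} {L : ℕ → ℕ} {v : ℕ → ℝ}
  (hLpos : ∀ k, 1 ≤ k → k ≤ K → 0 < L k)
  (hchain : ∀ k, 1 ≤ k → k < K → L k ∣ L (k + 1))
  (hv : ∀ k, k ≤ K → 0 < v k)

include hLpos in
lemma Lb_pos : ∀ j, j ≤ K → 0 < Lb L j := by
  intro j hj
  rcases Nat.eq_zero_or_pos j with h | h
  · simp [h, Lb_zero]
  · rw [Lb_eq L h]; exact hLpos j h hj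

include hLpos hchain in
lemma Lb_dvd_succ : ∀ j, j + 1 ≤ K → Lb L j ∣ Lb L (j + 1) := by
  intro j hj
  rcases Nat.eq_zero_or_pos j with h | h
  · subst h; simp [Lb_zero]
  · rw [Lb_eq L h, Lb_eq L (by omega)]
    exact hchain j h (by omega)

include hLpos hchain in
lemma Lb_dvd : ∀ i j, i ≤ j → j ≤ K → Lb L i ∣ Lb L j := by
  intro i j hij hj
  induction j with
  | zero => simpa [Nat.le_zero.mp hij] using dvd_refl _
  | succ n ih =>
      rcases Nat.lt_or_ge i (n + 1) with h | h
      · exact dvd_trans (ih (by omega) (by omega)) (Lb_dvd_succ hLpos hchain n hj)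
      · have : i = n + 1 := by omega
        subst this; exact dvd_refl _

include hLpos hv in
lemma lam_pos : ∀ k, k ≤ K → 0 < lam L v k := by
  intro k hk
  apply Finset.sum_pos
  · intro j hj
    simp only [Finset.mem_range] at hj
    have hjK : j ≤ K := by omega
    exact mul_pos (hv j hjK) (by exact_mod_cast Lb_pos hLpos j hjK)
  · exact ⟨0, Finset.mem_range.mpr (by omega)⟩

lemma lam_succ (k : ℕ) : lam L v (k + 1) = lam L v k + v (k + 1) * Lb L (k + 1) :=
  Finset.sum_range_succ _ _

end

lemma sum_range_mul' (f : ℕ → ℝ) (n l : ℕ) :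
    ∑ i ∈ Finset.range (n * l), f i
      = ∑ b ∈ Finset.range n, ∑ r ∈ Finset.range l, f (b * l + r) := by
  induction n with
  | zero => simp
  | succ n ih =>
      rw [Finset.sum_range_succ, ← ih, Nat.succ_mul, Finset.sum_range_add]



lemma bS_def (y : ℕ → ℝ) (l b : ℕ) : bS y l b = ∑ i ∈ Finset.range l, y (b * l + i) := rfl
lemma qq_def (L : ℕ → ℕ) (k j : ℕ) (y : ℕ → ℝ) :
  qq L k j y = (∑ b ∈ Finset.range (Lb L k / Lb L j), (bS y (Lb L j) b) ^ 2) / Lb L j := rfl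

lemma sum_range_mul'' (g : ℕ → ℝ) (n l : ℕ) :
    ∑ b ∈ Finset.range (n * l), g b
      = ∑ j ∈ Finset.range n, ∑ b' ∈ Finset.range l, g (j * l + b') :=
  sum_range_mul' g n l

lemma qq_split {L : ℕ → ℕ} {j n : ℕ} (y : ℕ → ℝ)
    (hjn : Lb L j ∣ Lb L n) (hn : Lb L n ∣ Lb L (n + 1)) (hLn : 0 < Lb L n) :
    ∑ jj ∈ Finset.range (Lb L (n + 1) / Lb L n),
        qq L n j (fun i => y (jj * Lb L n + i))
      = qq L (n + 1) j y := by
  set Lj := Lb L j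
  set Ln := Lb L n
  set M := Ln / Lj with hM
  have hMLj : M * Lj = Ln := Nat.div_mul_cancel hjn
  have hsplit : Lb L (n+1) / Lj = (Lb L (n+1) / Ln) * M := by
    obtain ⟨c, hc⟩ := hn
    rw [hc, Nat.mul_div_cancel_left _ hLn, hM, mul_comm Ln c,
      Nat.mul_div_assoc c hjn]
  rw [qq_def L (n+1) j y, hsplit, sum_range_mul'', Finset.sum_div]
  apply Finset.sum_congr rfl
  intro jj _
  rw [qq_def]
  congr 1
  apply Finset.sum_congr rfl
  intro b' _
  congr 1
  rw [bS_def, bS_def]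
  apply Finset.sum_congr rfl
  intro i _
  congr 1
  rw [add_mul, mul_assoc, hMLj]
  ring


section
variable {K : ℕ} {L : ℕ → ℕ} {v : ℕ → ℝ}
  (hLpos : ∀ k, 1 ≤ k → k ≤ K → 0 < L k)
  (hchain : ∀ k, 1 ≤ k → k < K → L k ∣ L (k + 1))
  (hv : ∀ k, k ≤ K → 0 < v k)


include hLpos hv in
lemma gc_exp (k : ℕ) (hk : k ≤ K) :
    gc L v k = Real.exp (
      Real.log (2 * π) * (-((Lb L k : ℝ) - 1) / 2)
      + Real.log (Lb L k) * (-(1:ℝ) / 2)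
      + ∑ j ∈ Finset.range k, Real.log (lam L v j) *
          (-(((Lb L k / Lb L j : ℕ) : ℝ) - ((Lb L k / Lb L (j + 1) : ℕ) : ℝ)) / 2)) := by
  have hLb : (0:ℝ) < (Lb L k : ℝ) := by exact_mod_cast Lb_pos hLpos k hk
  rw [gc, Real.rpow_def_of_pos (by positivity), Real.rpow_def_of_pos hLb,
    Finset.prod_congr rfl (fun j hj => Real.rpow_def_of_pos
      (lam_pos hLpos hv j (le_trans (le_of_lt (Finset.mem_range.mp hj)) hk)) _),
    ← Real.exp_sum, ← Real.exp_add, ← Real.exp_add]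

include hLpos hchain hv in
lemma krsbSmooth_eq : ∀ k, 1 ≤ k → k ≤ K → ∀ y m,
    krsbSmooth L v k y m =
      gc L v k * Real.exp (-(1/2) * rq L v k y)
        * gaussPdf (avg L k y) m (lam L v k / Lb L k) := by
  intro k hk
  induction k, hk using Nat.le_induction with
  | base =>
    intro hK y m
    have hL1 : 0 < L 1 := hLpos 1 le_rfl hK
    have hv0 : 0 < v 0 := hv 0 (by omega)
    have hv1 : 0 < v 1 := hv 1 hK
    have hL1R : (0:ℝ) < (L 1 : ℝ) := by exact_mod_cast hL1
    set S := ∑ i ∈ Finset.range (L 1), y i with hS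
    show (∫ m0 : ℝ, gaussPdf m0 m (v 1) * ∏ i ∈ Finset.range (L 1), gaussPdf (y i) m0 (v 0)) = _
    have hint : (fun m0 : ℝ => gaussPdf m0 m (v 1)
          * ∏ i ∈ Finset.range (L 1), gaussPdf (y i) m0 (v 0))
        = fun m0 : ℝ =>
          ((2 * π * v 0) ^ (-((L 1 : ℝ) - 1)/2) * ((L 1 : ℝ)) ^ (-(1:ℝ)/2) *
            Real.exp (-(1/2) * (v 0)⁻¹ *
              ((∑ i ∈ Finset.range (L 1), (y i)^2) - S^2 / (L 1)))) *
          (gaussPdf m0 m (v 1) * gaussPdf m0 (S / (L 1)) (v 0 / L 1)) := by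
      funext m0
      rw [prod_gaussPdf hv0 hL1 y m0]
      ring
    rw [hint, MeasureTheory.integral_const_mul, integral_gaussPdf_mul hv1 (by positivity)]
    have hA : S / (L 1 : ℝ) = avg L 1 y := by
      rw [avg, Lb_eq L le_rfl]
    have hB : v 1 + v 0 / (L 1 : ℝ) = lam L v 1 / Lb L 1 := by
      rw [lam, Lb_eq L le_rfl]
      rw [Finset.sum_range_succ, Finset.sum_range_one, Lb_zero, Lb_eq L le_rfl]
      push_cast
      field_simp
      ring
    have hq0 : qq L 1 0 y = ∑ b ∈ Finset.range (L 1), (y b)^2 := by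
      rw [qq_def, Lb_zero, Lb_eq L le_rfl]
      simp [bS_def]
    have hq1 : qq L 1 1 y = S^2 / (L 1 : ℝ) := by
      rw [qq_def, Lb_eq L le_rfl, Nat.div_self hL1]
      simp [bS_def, hS]
    have hrq : rq L v 1 y = (v 0)⁻¹ * ((∑ i ∈ Finset.range (L 1), (y i)^2) - S^2 / (L 1)) := by
      rw [rq, Finset.sum_range_one, hq0, hq1, lam, Finset.sum_range_one, Lb_zero]
      norm_num
    have hgc : gc L v 1 = (2 * π) ^ (-((L 1 : ℝ) - 1)/2) * ((L 1 : ℝ)) ^ (-(1:ℝ)/2)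
        * (v 0) ^ (-((L 1 : ℝ) - 1)/2) := by
      rw [gc, Finset.prod_range_one, Lb_zero, Lb_eq L le_rfl, Nat.div_one,
        Nat.div_self hL1, lam, Finset.sum_range_one, Lb_zero]
      norm_num
    rw [hA, hB, hrq, hgc, Real.mul_rpow (by positivity) hv0.le]
    ring
  | succ n hn ih =>
    intro hK y m
    obtain ⟨p, rfl⟩ : ∃ p, n = p + 1 := ⟨n - 1, by omega⟩
    have hnK : p + 1 ≤ K := by omega
    have hLn : 0 < L (p + 1) := hLpos _ (by omega) hnK
    have hLn2 : 0 < L (p + 2) := hLpos _ (by omega) (by omega)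
    have hdvd : L (p + 1) ∣ L (p + 2) := hchain (p + 1) (by omega) (by omega)
    set nn := L (p + 2) / L (p + 1) with hnn_def
    have hnn : 0 < nn := Nat.div_pos (Nat.le_of_dvd hLn2 hdvd) hLn
    have hmul : nn * L (p + 1) = L (p + 2) := Nat.div_mul_cancel hdvd
    have hlamp : 0 < lam L v (p + 1) := lam_pos hLpos hv _ hnK
    have hLbp : Lb L (p + 1) = L (p + 1) := Lb_eq L (by omega)
    have hLbp2 : Lb L (p + 2) = L (p + 2) := Lb_eq L (by omega)
    set τ := lam L v (p + 1) / Lb L (p + 1) with hτ_def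
    have hτ : 0 < τ := by
      rw [hτ_def, hLbp]; positivity
    set a : ℕ → ℝ := fun j => avg L (p + 1) (fun i => y (j * L (p + 1) + i)) with ha_def
    set Sa := ∑ j ∈ Finset.range nn, a j with hSa
    have hnnR : (0:ℝ) < (nn:ℝ) := by exact_mod_cast hnn
    show (∫ m' : ℝ, gaussPdf m' m (v (p + 2)) *
        ∏ j ∈ Finset.range (L (p + 2) / L (p + 1)),
          krsbSmooth L v (p + 1) (fun i => y (j * L (p + 1) + i)) m') = _
    have hint : (fun m' : ℝ => gaussPdf m' m (v (p + 2)) *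
          ∏ j ∈ Finset.range (L (p + 2) / L (p + 1)),
            krsbSmooth L v (p + 1) (fun i => y (j * L (p + 1) + i)) m')
        = fun m' : ℝ =>
          (gc L v (p + 1) ^ nn
            * Real.exp (-(1/2) * ∑ j ∈ Finset.range nn,
                rq L v (p + 1) (fun i => y (j * L (p + 1) + i)))
            * ((2 * π * τ) ^ (-((nn:ℝ) - 1)/2) * (nn:ℝ) ^ (-(1:ℝ)/2) *
                Real.exp (-(1/2) * τ⁻¹ *
                  ((∑ j ∈ Finset.range nn, (a j)^2) - Sa^2 / nn)))) *
          (gaussPdf m' m (v (p + 2)) * gaussPdf m' (Sa / nn) (τ / nn)) := by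
      funext m'
      rw [Finset.prod_congr rfl
        (fun j _ => ih hnK (fun i => y (j * L (p + 1) + i)) m')]
      rw [Finset.prod_mul_distrib, Finset.prod_mul_distrib, Finset.prod_const,
        Finset.card_range, ← Real.exp_sum, ← Finset.mul_sum,
        prod_gaussPdf hτ hnn a m']
      ring
    rw [hint, MeasureTheory.integral_const_mul,
      integral_gaussPdf_mul (hv (p + 2) (by omega)) (by positivity)]
    have hbSa : ∀ j, a j = bS y (L (p + 1)) j / L (p + 1) := by
      intro j
      simp only [ha_def, avg, bS_def, hLbp]
    have hSsum : Sa = (∑ i ∈ Finset.range (L (p + 2)), y i) / L (p + 1) := by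
      rw [hSa, ← hmul, sum_range_mul' y nn (L (p + 1)), Finset.sum_div]
      exact Finset.sum_congr rfl fun j _ => by rw [hbSa j, bS_def]
    have hA : Sa / nn = avg L (p + 2) y := by
      rw [hSsum, avg, hLbp2, div_div, ← hmul]
      push_cast
      ring_nf
    have hB : v (p + 2) + τ / nn = lam L v (p + 2) / Lb L (p + 2) := by
      have h2 : lam L v (p + 1 + 1) = lam L v (p + 1) + v (p + 2) * L (p + 2) := by
        rw [lam_succ, hLbp2]
      have hLR : (0:ℝ) < (L (p+1):ℝ) := by exact_mod_cast hLn
      rw [hτ_def, hLbp, h2, hLbp2, ← hmul]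
      push_cast
      field_simp
      ring
    have hqsplit : ∀ j', j' ≤ p + 1 →
        ∑ jj ∈ Finset.range nn, qq L (p + 1) j' (fun i => y (jj * L (p + 1) + i))
          = qq L (p + 2) j' y := by
      intro j' hj'
      have h := qq_split (L := L) (j := j') (n := p + 1) y
        (Lb_dvd hLpos hchain j' (p + 1) hj' hnK)
        (Lb_dvd_succ hLpos hchain (p + 1) (by omega))
        (by rw [hLbp]; exact hLn)
      rwa [hLbp, hLbp2] at h
    have hq1' : qq L (p + 2) (p + 1) y
        = (∑ j ∈ Finset.range nn, (bS y (L (p + 1)) j)^2) / L (p + 1) := by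
      rw [qq_def, hLbp, hLbp2]
    have hq2' : qq L (p + 2) (p + 2) y
        = (∑ i ∈ Finset.range (L (p + 2)), y i)^2 / L (p + 2) := by
      rw [qq_def, hLbp2, Nat.div_self hLn2]
      simp [bS_def]
    have hE : Real.exp (-(1/2) * ∑ j ∈ Finset.range nn,
            rq L v (p + 1) (fun i => y (j * L (p + 1) + i)))
          * Real.exp (-(1/2) * τ⁻¹ * ((∑ j ∈ Finset.range nn, (a j)^2) - Sa^2 / nn))
        = Real.exp (-(1/2) * rq L v (p + 2) y) := by
      have hpart1 : ∑ j ∈ Finset.range nn, rq L v (p + 1) (fun i => y (j * L (p + 1) + i))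
          = ∑ j' ∈ Finset.range (p + 1),
              (lam L v j')⁻¹ * (qq L (p + 2) j' y - qq L (p + 2) (j' + 1) y) := by
        unfold rq
        rw [Finset.sum_comm]
        apply Finset.sum_congr rfl
        intro j' hj'
        simp only [Finset.mem_range] at hj'
        rw [← Finset.mul_sum, Finset.sum_sub_distrib,
          hqsplit j' (by omega), hqsplit (j' + 1) (by omega)]
      have hsq : (∑ j ∈ Finset.range nn, (a j)^2)
          = (∑ j ∈ Finset.range nn, (bS y (L (p + 1)) j)^2) / ((L (p + 1) : ℝ))^2 := by
        rw [Finset.sum_div]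
        exact Finset.sum_congr rfl fun j _ => by rw [hbSa, div_pow]
      have hpart2 : τ⁻¹ * ((∑ j ∈ Finset.range nn, (a j)^2) - Sa^2 / nn)
          = (lam L v (p + 1))⁻¹ * (qq L (p + 2) (p + 1) y - qq L (p + 2) (p + 2) y) := by
        rw [hq1', hq2', hτ_def, hLbp, hSsum, hsq, ← hmul]
        have hLR : (0:ℝ) < (L (p+1):ℝ) := by exact_mod_cast hLn
        push_cast
        field_simp
      rw [← Real.exp_add]
      congr 1
      have hrq2 : rq L v (p + 2) y
          = (∑ j' ∈ Finset.range (p + 1),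
              (lam L v j')⁻¹ * (qq L (p + 2) j' y - qq L (p + 2) (j' + 1) y))
            + (lam L v (p + 1))⁻¹ * (qq L (p + 2) (p + 1) y - qq L (p + 2) (p + 2) y) := by
        rw [rq, Finset.sum_range_succ]
      rw [hrq2, ← hpart1, ← hpart2]
      ring
    have hC : gc L v (p + 1) ^ nn * ((2 * π * τ) ^ (-((nn:ℝ) - 1)/2) * (nn:ℝ) ^ (-(1:ℝ)/2))
        = gc L v (p + 2) := by
      have h2π : (0:ℝ) < 2 * π := by positivity
      have hLpR : (0:ℝ) < (Lb L (p + 1) : ℝ) := by rw [hLbp]; exact_mod_cast hLn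
      have hcast : ((Lb L (p + 2)) : ℝ) = (nn:ℝ) * (Lb L (p + 1) : ℝ) := by
        rw [hLbp, hLbp2, ← hmul]; push_cast; ring
      have hdivmul : ∀ j', j' ≤ p + 1 →
          Lb L (p + 2) / Lb L j' = nn * (Lb L (p + 1) / Lb L j') := by
        intro j' hj'
        rw [hLbp2, ← hmul, show nn * L (p + 1) = nn * Lb L (p + 1) by rw [hLbp]]
        exact Nat.mul_div_assoc nn (Lb_dvd hLpos hchain j' (p + 1) hj' hnK)
      have hnn2 : Lb L (p + 2) / Lb L (p + 1) = nn := by rw [hLbp2, hLbp]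
      have hnn3 : Lb L (p + 2) / Lb L (p + 2) = 1 :=
        Nat.div_self (by rw [hLbp2]; exact hLn2)
      have hsum2 : ∑ j ∈ Finset.range (p + 2), Real.log (lam L v j) *
            (-(((Lb L (p + 2) / Lb L j : ℕ) : ℝ) - ((Lb L (p + 2) / Lb L (j + 1) : ℕ) : ℝ)) / 2)
          = (nn:ℝ) * (∑ j ∈ Finset.range (p + 1), Real.log (lam L v j) *
              (-(((Lb L (p + 1) / Lb L j : ℕ) : ℝ) - ((Lb L (p + 1) / Lb L (j + 1) : ℕ) : ℝ)) / 2))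
            + Real.log (lam L v (p + 1)) * (-((nn:ℝ) - 1) / 2) := by
        rw [Finset.sum_range_succ, Finset.mul_sum]
        congr 1
        · apply Finset.sum_congr rfl
          intro j hj
          simp only [Finset.mem_range] at hj
          rw [hdivmul j (by omega), hdivmul (j + 1) (by omega)]
          push_cast
          ring
        · rw [hnn2, hnn3]
          push_cast
          ring
      have hlogτ : Real.log (2 * π * τ)
          = Real.log (2 * π) + Real.log (lam L v (p + 1)) - Real.log (Lb L (p + 1)) := by
        rw [hτ_def, Real.log_mul (by positivity) (by positivity),
          Real.log_div hlamp.ne' (ne_of_gt hLpR)]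
        ring
      have hlogL2 : Real.log (Lb L (p + 2) : ℝ)
          = Real.log (nn:ℝ) + Real.log (Lb L (p + 1) : ℝ) := by
        rw [hcast, Real.log_mul hnnR.ne' (ne_of_gt hLpR)]
      rw [gc_exp hLpos hv (p + 1) hnK, gc_exp hLpos hv (p + 2) (by omega),
        ← Real.exp_nat_mul, Real.rpow_def_of_pos (by positivity : (0:ℝ) < 2 * π * τ),
        Real.rpow_def_of_pos hnnR, ← Real.exp_add, ← Real.exp_add]
      congr 1
      rw [hsum2, hlogτ, hlogL2, hcast]
      ring
    rw [hA, hB]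
    calc gc L v (p + 1) ^ nn
          * Real.exp (-(1/2) * ∑ j ∈ Finset.range nn,
              rq L v (p + 1) (fun i => y (j * L (p + 1) + i)))
          * ((2 * π * τ) ^ (-((nn:ℝ) - 1)/2) * (nn:ℝ) ^ (-(1:ℝ)/2) *
              Real.exp (-(1/2) * τ⁻¹ * ((∑ j ∈ Finset.range nn, (a j)^2) - Sa^2 / nn)))
          * gaussPdf (avg L (p + 2) y) m (lam L v (p + 2) / Lb L (p + 2))
        = (gc L v (p + 1) ^ nn * ((2 * π * τ) ^ (-((nn:ℝ) - 1)/2) * (nn:ℝ) ^ (-(1:ℝ)/2)))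
          * (Real.exp (-(1/2) * ∑ j ∈ Finset.range nn,
              rq L v (p + 1) (fun i => y (j * L (p + 1) + i)))
            * Real.exp (-(1/2) * τ⁻¹ * ((∑ j ∈ Finset.range nn, (a j)^2) - Sa^2 / nn)))
          * gaussPdf (avg L (p + 2) y) m (lam L v (p + 2) / Lb L (p + 2)) := by ring
      _ = _ := by rw [hE, hC]

end


noncomputable def Qmat (L : ℕ → ℕ) (K j : ℕ) : Matrix (Fin (L K)) (Fin (L K)) ℝ :=
  Matrix.of fun i i' => if (i : ℕ) / Lb L j = (i' : ℕ) / Lb L j then ((Lb L j : ℝ))⁻¹ else 0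

lemma block_sum {N l lb : ℕ} (hl : 0 < l) (hab : l ∣ lb) (hbN : lb ∣ N)
    {s : ℕ} (hs : s < N) (f : ℕ → ℝ) :
    ∑ t ∈ Finset.range N, (if t / l = s / l then f (t / lb) else 0)
      = l * f (s / lb) := by
  have hlN : l ∣ N := dvd_trans hab hbN
  set q := s / l with hq
  have hQ1 : q * l + l ≤ N := by
    have h1 : q < N / l := Nat.div_lt_div_of_lt_of_dvd hlN hs
    have h2 : (q + 1) * l ≤ (N / l) * l := Nat.mul_le_mul_right _ h1
    rw [Nat.div_mul_cancel hlN] at h2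
    rw [add_mul, one_mul] at h2
    exact h2
  have hsub : Finset.Ico (q * l) (q * l + l) ⊆ Finset.range N := by
    intro t ht
    rw [Finset.mem_Ico] at ht
    rw [Finset.mem_range]
    omega
  have hzero : ∀ t ∈ Finset.range N, t ∉ Finset.Ico (q * l) (q * l + l) →
      (if t / l = s / l then f (t / lb) else 0) = 0 := by
    intro t _ htno
    rw [if_neg]
    intro hdiv
    apply htno
    rw [Finset.mem_Ico]
    constructor
    · calc q * l = t / l * l := by rw [hdiv]
        _ ≤ t := Nat.div_mul_le_self t l
    · have h3 : t / l < q + 1 := by omega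
      have h4 : t < (q + 1) * l := (Nat.div_lt_iff_lt_mul hl).mp h3
      rw [add_mul, one_mul] at h4
      exact h4
  rw [← Finset.sum_subset hsub hzero]
  have hconst : ∀ t ∈ Finset.Ico (q * l) (q * l + l),
      (if t / l = s / l then f (t / lb) else 0) = f (s / lb) := by
    intro t ht
    rw [Finset.mem_Ico] at ht
    have ht' : t / l = q := by
      apply Nat.div_eq_of_lt_le ht.1
      rw [Nat.succ_mul]
      exact ht.2
    rw [if_pos ht']
    congr 1
    obtain ⟨c, hc⟩ := hab
    rw [hc, ← Nat.div_div_eq_div_mul, ← Nat.div_div_eq_div_mul, ht']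
  rw [Finset.sum_congr rfl hconst, Finset.sum_const, Nat.card_Ico,
    Nat.add_sub_cancel_left, nsmul_eq_mul]

lemma block_sum' {N l lb : ℕ} (hl : 0 < l) (hab : l ∣ lb) (hbN : lb ∣ N)
    {s : ℕ} (hs : s < N) (f : ℕ → ℝ) :
    ∑ t : Fin N, (if (t : ℕ) / l = s / l then f ((t : ℕ) / lb) else 0)
      = l * f (s / lb) := by
  rw [← block_sum hl hab hbN hs f]
  exact Fin.sum_univ_eq_sum_range (fun tv => if tv / l = s / l then f (tv / lb) else 0) N

lemma Qmat_mul {K : ℕ} {L : ℕ → ℕ} {a b : ℕ} (hab : Lb L a ∣ Lb L b)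
    (hbN : Lb L b ∣ L K) (ha : 0 < Lb L a) :
    Qmat L K a * Qmat L K b = Qmat L K b ∧ Qmat L K b * Qmat L K a = Qmat L K b := by
  have haR : ((Lb L a : ℝ)) ≠ 0 := by positivity
  constructor
  · ext i i'
    rw [Matrix.mul_apply]
    simp only [Qmat, Matrix.of_apply]
    calc ∑ t : Fin (L K),
          (if (i : ℕ) / Lb L a = (t : ℕ) / Lb L a then ((Lb L a : ℝ))⁻¹ else 0) *
            (if (t : ℕ) / Lb L b = (i' : ℕ) / Lb L b then ((Lb L b : ℝ))⁻¹ else 0)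
        = ∑ t : Fin (L K), (if (t : ℕ) / Lb L a = (i : ℕ) / Lb L a then
            ((Lb L a : ℝ))⁻¹ * (if (t : ℕ) / Lb L b = (i' : ℕ) / Lb L b then ((Lb L b : ℝ))⁻¹ else 0)
            else 0) := by
          apply Finset.sum_congr rfl
          intro t _
          by_cases h : (i : ℕ) / Lb L a = (t : ℕ) / Lb L a
          · rw [if_pos h, if_pos h.symm]
          · rw [if_neg h, zero_mul, if_neg (fun hh => h hh.symm)]
      _ = (Lb L a : ℝ) * (((Lb L a : ℝ))⁻¹ *
            (if (i : ℕ) / Lb L b = (i' : ℕ) / Lb L b then ((Lb L b : ℝ))⁻¹ else 0)) :=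
          block_sum' ha hab hbN i.isLt
            (fun d => ((Lb L a : ℝ))⁻¹ * (if d = (i' : ℕ) / Lb L b then ((Lb L b : ℝ))⁻¹ else 0))
      _ = (if (i : ℕ) / Lb L b = (i' : ℕ) / Lb L b then ((Lb L b : ℝ))⁻¹ else 0) := by
          rw [← mul_assoc, mul_inv_cancel₀ haR, one_mul]
  · ext i i'
    rw [Matrix.mul_apply]
    simp only [Qmat, Matrix.of_apply]
    calc ∑ t : Fin (L K),
          (if (i : ℕ) / Lb L b = (t : ℕ) / Lb L b then ((Lb L b : ℝ))⁻¹ else 0) *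
            (if (t : ℕ) / Lb L a = (i' : ℕ) / Lb L a then ((Lb L a : ℝ))⁻¹ else 0)
        = ∑ t : Fin (L K), (if (t : ℕ) / Lb L a = (i' : ℕ) / Lb L a then
            (if (i : ℕ) / Lb L b = (t : ℕ) / Lb L b then ((Lb L b : ℝ))⁻¹ else 0) * ((Lb L a : ℝ))⁻¹
            else 0) := by
          apply Finset.sum_congr rfl
          intro t _
          by_cases h : (t : ℕ) / Lb L a = (i' : ℕ) / Lb L a
          · rw [if_pos h, if_pos h]
          · rw [if_neg h, mul_zero, if_neg h]
      _ = (Lb L a : ℝ) * ((if (i : ℕ) / Lb L b = (i' : ℕ) / Lb L b then ((Lb L b : ℝ))⁻¹ else 0)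
            * ((Lb L a : ℝ))⁻¹) :=
          block_sum' ha hab hbN i'.isLt
            (fun d => (if (i : ℕ) / Lb L b = d then ((Lb L b : ℝ))⁻¹ else 0) * ((Lb L a : ℝ))⁻¹)
      _ = (if (i : ℕ) / Lb L b = (i' : ℕ) / Lb L b then ((Lb L b : ℝ))⁻¹ else 0) := by
          rw [mul_comm ((if (i : ℕ) / Lb L b = (i' : ℕ) / Lb L b then ((Lb L b : ℝ))⁻¹ else 0))
            ((Lb L a : ℝ))⁻¹, ← mul_assoc, mul_inv_cancel₀ haR, one_mul]

lemma Qmat_zero {K : ℕ} {L : ℕ → ℕ} : Qmat L K 0 = 1 := by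
  ext i i'
  simp [Qmat, Lb_zero, Matrix.one_apply, Fin.val_inj]

end KRSB

namespace KRSB

noncomputable def Tmat (L : ℕ → ℕ) (v : ℕ → ℝ) (K m : ℕ) : Matrix (Fin (L K)) (Fin (L K)) ℝ :=
  ∑ j ∈ Finset.range (m + 1), (v j * Lb L j) • Qmat L K j

noncomputable def cB (L : ℕ → ℕ) (v : ℕ → ℝ) : ℕ → ℝ
  | 0 => (lam L v 0)⁻¹
  | (j + 1) => (lam L v (j + 1))⁻¹ - (lam L v j)⁻¹

noncomputable def Bmat (L : ℕ → ℕ) (v : ℕ → ℝ) (K m : ℕ) : Matrix (Fin (L K)) (Fin (L K)) ℝ :=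
  ∑ j ∈ Finset.range (m + 1), cB L v j • Qmat L K j

lemma lam_zero (L : ℕ → ℕ) (v : ℕ → ℝ) : lam L v 0 = v 0 := by
  simp [lam, Lb_zero]

lemma csum (L : ℕ → ℕ) (v : ℕ → ℝ) :
    ∀ m, ∑ j ∈ Finset.range (m + 1), cB L v j = (lam L v m)⁻¹ := by
  intro m
  induction m with
  | zero => simp [cB]
  | succ n ih =>
      rw [Finset.sum_range_succ, ih]
      show (lam L v n)⁻¹ + ((lam L v (n + 1))⁻¹ - (lam L v n)⁻¹) = _
      ring

section MatMain
variable {K : ℕ} {L : ℕ → ℕ} {v : ℕ → ℝ}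
  (hK : 0 < K)
  (hLpos : ∀ k, 1 ≤ k → k ≤ K → 0 < L k)
  (hchain : ∀ k, 1 ≤ k → k < K → L k ∣ L (k + 1))
  (hv : ∀ k, k ≤ K → 0 < v k)

include hK hLpos hchain in
lemma Lb_dvd_LK : ∀ j, j ≤ K → Lb L j ∣ L K := by
  intro j hj
  have h := Lb_dvd hLpos hchain j K hj le_rfl
  rwa [Lb_eq L hK] at h

include hK hLpos hchain in
lemma TQ (m : ℕ) (hm : m + 1 ≤ K) :
    Tmat L v K m * Qmat L K (m + 1) = lam L v m • Qmat L K (m + 1) := by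
  rw [Tmat, Finset.sum_mul, Finset.sum_congr rfl (fun j hj => by
      have hjm : j ≤ m := Nat.lt_succ_iff.mp (Finset.mem_range.mp hj)
      rw [smul_mul_assoc, (Qmat_mul
        (Lb_dvd hLpos hchain j (m + 1) (by omega) hm)
        (Lb_dvd_LK hK hLpos hchain (m + 1) hm)
        (Lb_pos hLpos j (by omega))).1]),
    ← Finset.sum_smul]
  rfl

include hK hLpos hchain in
lemma QB (m : ℕ) (hm : m + 1 ≤ K) :
    Qmat L K (m + 1) * Bmat L v K m = (lam L v m)⁻¹ • Qmat L K (m + 1) := by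
  rw [Bmat, Finset.mul_sum, Finset.sum_congr rfl (fun j hj => by
      have hjm : j ≤ m := Nat.lt_succ_iff.mp (Finset.mem_range.mp hj)
      rw [mul_smul_comm, (Qmat_mul
        (Lb_dvd hLpos hchain j (m + 1) (by omega) hm)
        (Lb_dvd_LK hK hLpos hchain (m + 1) hm)
        (Lb_pos hLpos j (by omega))).2]),
    ← Finset.sum_smul, csum]

include hK hLpos hchain hv in
lemma TB : ∀ m, m ≤ K → Tmat L v K m * Bmat L v K m = 1 := by
  intro m
  induction m with
  | zero =>
      intro _
      have hv0 : v 0 ≠ 0 := (hv 0 (by omega)).ne'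
      rw [Tmat, Bmat, show (0:ℕ) + 1 = 1 from rfl, Finset.sum_range_one,
        Finset.sum_range_one, Qmat_zero]
      show ((v 0 * (Lb L 0 : ℝ)) • 1) * ((lam L v 0)⁻¹ • 1) = 1
      rw [smul_mul_assoc, one_mul, smul_smul, lam_zero, Lb_zero]
      rw [show v 0 * ((1:ℕ):ℝ) * (v 0)⁻¹ = 1 by push_cast; field_simp]
      rw [one_smul]
  | succ m ih =>
      intro hm1
      have hmK : m ≤ K := by omega
      have hlam : lam L v m ≠ 0 := (lam_pos hLpos hv m hmK).ne'
      have hlam1 : lam L v (m + 1) ≠ 0 := (lam_pos hLpos hv (m + 1) hm1).ne'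
      have hQQ : Qmat L K (m + 1) * Qmat L K (m + 1) = Qmat L K (m + 1) :=
        (Qmat_mul dvd_rfl (Lb_dvd_LK hK hLpos hchain (m + 1) hm1)
          (Lb_pos hLpos (m + 1) hm1)).1
      have hT : Tmat L v K (m + 1)
          = Tmat L v K m + (v (m + 1) * Lb L (m + 1)) • Qmat L K (m + 1) :=
        Finset.sum_range_succ _ _
      have hB : Bmat L v K (m + 1) = Bmat L v K m + cB L v (m + 1) • Qmat L K (m + 1) :=
        Finset.sum_range_succ _ _
      rw [hT, hB, add_mul, mul_add, mul_add, ih hmK,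
        mul_smul_comm, TQ hK hLpos hchain m hm1,
        smul_mul_assoc, QB hK hLpos hchain m hm1,
        smul_mul_assoc, mul_smul_comm, hQQ,
        smul_smul, smul_smul, smul_smul, ← add_smul, add_assoc, ← add_smul]
      have hvLb : v (m + 1) * (Lb L (m + 1) : ℝ) = lam L v (m + 1) - lam L v m := by
        rw [lam_succ]; ring
      have hcB1 : cB L v (m + 1) = (lam L v (m + 1))⁻¹ - (lam L v m)⁻¹ := rfl
      have hscal : cB L v (m + 1) * lam L v m
          + (v (m + 1) * (Lb L (m + 1) : ℝ) * (lam L v m)⁻¹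
            + v (m + 1) * (Lb L (m + 1) : ℝ) * cB L v (m + 1)) = 0 := by
        rw [hcB1, hvLb]
        field_simp
        ring
      rw [hscal, zero_smul, add_zero]

include hK hLpos in
lemma cov_eq : krsbCov K L v = Tmat L v K K := by
  obtain ⟨K', rfl⟩ : ∃ K', K = K' + 1 := ⟨K - 1, by omega⟩
  ext i i'
  rw [Tmat, Matrix.sum_apply]
  have hterm : ∀ j ∈ Finset.range (K' + 2),
      ((v j * (Lb L j : ℝ)) • Qmat L (K' + 1) j) i i'
        = (if (i : ℕ) / Lb L j = (i' : ℕ) / Lb L j then v j else 0) := by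
    intro j hj
    simp only [Finset.mem_range] at hj
    have hLbj : ((Lb L j : ℝ)) ≠ 0 := by
      have := Lb_pos hLpos j (by omega)
      positivity
    rw [Matrix.smul_apply, smul_eq_mul]
    show v j * (Lb L j : ℝ) * (if (i : ℕ) / Lb L j = (i' : ℕ) / Lb L j
      then ((Lb L j : ℝ))⁻¹ else 0) = _
    split_ifs with h
    · rw [mul_assoc, mul_inv_cancel₀ hLbj, mul_one]
    · rw [mul_zero]
  rw [Finset.sum_congr rfl hterm, Finset.sum_range_succ, Finset.sum_range_succ']
  have htop : (if (i : ℕ) / Lb L (K' + 1) = (i' : ℕ) / Lb L (K' + 1)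
      then v (K' + 1) else 0) = v (K' + 1) := by
    rw [if_pos]
    rw [Lb_eq L (by omega), Nat.div_eq_of_lt i.isLt, Nat.div_eq_of_lt i'.isLt]
  have hbot : (if (i : ℕ) / Lb L 0 = (i' : ℕ) / Lb L 0 then v 0 else 0)
      = (if i = i' then v 0 else 0) := by
    simp [Lb_zero, Fin.val_inj]
  have hmid : ∑ j ∈ Finset.range K',
        (if (i : ℕ) / Lb L (j + 1) = (i' : ℕ) / Lb L (j + 1) then v (j + 1) else 0)
      = ∑ k ∈ Finset.Icc 1 (K' + 1 - 1),
          (if (i : ℕ) / L k = (i' : ℕ) / L k then v k else 0) := by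
    rw [show K' + 1 - 1 = K' from rfl, ← Finset.Ico_add_one_right_eq_Icc, Finset.sum_Ico_eq_sum_range,
      show K' + 1 - 1 = K' from rfl]
    apply Finset.sum_congr rfl
    intro j _
    rw [Lb_eq L (by omega), add_comm 1 j]
  rw [htop, hbot, hmid]
  show (if i = i' then v 0 else 0) + v (K' + 1) + _ = _
  ring

end MatMain
end KRSB

namespace KRSB
lemma det_one_add_smul_Qmat {K : ℕ} {L : ℕ → ℕ} {j : ℕ} (hj : Lb L j ∣ L K)
    (hl : 0 < Lb L j) (c : ℝ) :
    ((1 : Matrix (Fin (L K)) (Fin (L K)) ℝ) + c • Qmat L K j).det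
      = (1 + c) ^ (L K / Lb L j) := by
  set l := Lb L j with hldef
  set n := L K / l with hndef
  have hnl : n * l = L K := Nat.div_mul_cancel hj
  have hlR : ((l : ℝ)) ≠ 0 := by positivity
  set e : Fin l × Fin n ≃ Fin (L K) :=
    ((Equiv.prodComm (Fin l) (Fin n)).trans ((finProdFinEquiv).trans (finCongr hnl)))
    with he_def
  have heval : ∀ p : Fin l × Fin n, ((e p : Fin (L K)) : ℕ) = (p.1 : ℕ) + l * (p.2 : ℕ) := by
    intro p
    simp [he_def, finProdFinEquiv, Equiv.prodComm]
  have hdiv : ∀ p : Fin l × Fin n, ((e p : Fin (L K)) : ℕ) / l = (p.2 : ℕ) := by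
    intro p
    rw [heval p, Nat.add_mul_div_left _ _ hl, Nat.div_eq_of_lt p.1.isLt, zero_add]
  set D : Fin n → Matrix (Fin l) (Fin l) ℝ :=
    fun _ => (1 : Matrix (Fin l) (Fin l) ℝ) + Matrix.of (fun _ _ => c * (l : ℝ)⁻¹)
    with hD_def
  have hsub : ((1 : Matrix (Fin (L K)) (Fin (L K)) ℝ) + c • Qmat L K j).submatrix e e
      = Matrix.blockDiagonal D := by
    ext p p'
    rw [Matrix.submatrix_apply, Matrix.add_apply, Matrix.smul_apply, smul_eq_mul]
    show (if e p = e p' then (1:ℝ) else 0)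
        + c * (if ((e p : Fin (L K)) : ℕ) / l = ((e p' : Fin (L K)) : ℕ) / l
            then ((l:ℝ))⁻¹ else 0)
      = Matrix.blockDiagonal D p p'
    rw [hdiv p, hdiv p']
    rcases p with ⟨r, b⟩
    rcases p' with ⟨r', b'⟩
    rw [Matrix.blockDiagonal_apply]
    by_cases hbb : b = b'
    · rw [if_pos hbb, if_pos (congrArg _ hbb)]
      have : (e (r, b) = e (r', b')) ↔ ((r, b) = (r', b')) := e.apply_eq_iff_eq
      rw [if_congr this rfl rfl]
      subst hbb
      show _ = (1 : Matrix (Fin l) (Fin l) ℝ) r r' + c * (l:ℝ)⁻¹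
      rw [Matrix.one_apply]
      by_cases hrr : r = r'
      · rw [if_pos hrr, if_pos (by rw [hrr])]
      · rw [if_neg hrr, if_neg (by intro hh; exact hrr (Prod.ext_iff.mp hh).1)]
    · rw [if_neg (fun hh : (b:ℕ) = (b':ℕ) => hbb (Fin.val_inj.mp hh)), if_neg hbb, mul_zero,
        if_neg (by intro hh; exact hbb (Prod.ext_iff.mp (e.injective hh)).2), add_zero]
  have hdetD : ∀ b : Fin n, (D b).det = 1 + c := by
    intro b
    have hcol : Matrix.of (fun _ _ : Fin l => c * (l : ℝ)⁻¹)
        = Matrix.replicateCol Unit (fun _ => c * (l : ℝ)⁻¹) * Matrix.replicateRow Unit (fun _ => (1:ℝ)) := by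
      ext r r'
      simp [Matrix.mul_apply, Matrix.replicateCol, Matrix.replicateRow]
    rw [hD_def]
    show ((1 : Matrix (Fin l) (Fin l) ℝ) + Matrix.of (fun _ _ => c * (l : ℝ)⁻¹)).det = 1 + c
    rw [hcol, Matrix.det_one_add_replicateCol_mul_replicateRow]
    congr 1
    show ∑ r : Fin l, (1:ℝ) * (c * (l:ℝ)⁻¹) = c
    rw [Finset.sum_const, Finset.card_univ, Fintype.card_fin, nsmul_eq_mul]
    field_simp
  rw [← Matrix.det_submatrix_equiv_self e, hsub, Matrix.det_blockDiagonal]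
  rw [Finset.prod_congr rfl (fun b _ => hdetD b), Finset.prod_const, Finset.card_univ,
    Fintype.card_fin]
end KRSB

namespace KRSB
section DetMain
variable {K : ℕ} {L : ℕ → ℕ} {v : ℕ → ℝ}
  (hK : 0 < K)
  (hLpos : ∀ k, 1 ≤ k → k ≤ K → 0 < L k)
  (hchain : ∀ k, 1 ≤ k → k < K → L k ∣ L (k + 1))
  (hv : ∀ k, k ≤ K → 0 < v k)

include hK hLpos hchain hv in
lemma detT : ∀ m, m ≤ K → (Tmat L v K m).det
    = (∏ j ∈ Finset.range m, (lam L v j) ^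
        (((L K / Lb L j : ℕ) : ℝ) - ((L K / Lb L (j + 1) : ℕ) : ℝ)))
      * (lam L v m) ^ (((L K / Lb L m : ℕ) : ℝ)) := by
  intro m
  induction m with
  | zero =>
      intro _
      rw [Tmat, show (0:ℕ) + 1 = 1 from rfl, Finset.sum_range_one, Qmat_zero,
        Matrix.det_smul, Matrix.det_one, mul_one, Fintype.card_fin,
        Finset.prod_range_zero, one_mul, Lb_zero, Nat.div_one, lam_zero,
        Nat.cast_one, mul_one, ← Real.rpow_natCast (v 0) (L K)]
  | succ m ih =>
      intro hm1
      have hmK : m ≤ K := by omega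
      have hlamm : 0 < lam L v m := lam_pos hLpos hv m hmK
      have hlam1 : 0 < lam L v (m + 1) := lam_pos hLpos hv (m + 1) hm1
      set c : ℝ := v (m + 1) * (Lb L (m + 1) : ℝ) / lam L v m with hc
      have hfact : Tmat L v K (m + 1) = Tmat L v K m *
          ((1 : Matrix (Fin (L K)) (Fin (L K)) ℝ) + c • Qmat L K (m + 1)) := by
        rw [mul_add, mul_one, mul_smul_comm, TQ hK hLpos hchain m hm1, smul_smul, hc,
          div_mul_cancel₀ _ hlamm.ne']
        exact Finset.sum_range_succ _ _
      have h1c : 1 + c = lam L v (m + 1) / lam L v m := by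
        rw [hc, lam_succ]
        field_simp
      rw [hfact, Matrix.det_mul, ih hmK,
        det_one_add_smul_Qmat (Lb_dvd_LK hK hLpos hchain (m + 1) hm1)
          (Lb_pos hLpos (m + 1) hm1), h1c,
        ← Real.rpow_natCast (lam L v (m + 1) / lam L v m) (L K / Lb L (m + 1)),
        Real.div_rpow hlam1.le hlamm.le, Finset.prod_range_succ]
      have hcomb : (lam L v m) ^ (((L K / Lb L m : ℕ) : ℝ))
            * ((lam L v (m + 1)) ^ (((L K / Lb L (m + 1) : ℕ) : ℝ))
              / (lam L v m) ^ (((L K / Lb L (m + 1) : ℕ) : ℝ)))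
          = (lam L v m) ^ ((((L K / Lb L m : ℕ) : ℝ)) - (((L K / Lb L (m + 1) : ℕ) : ℝ)))
            * (lam L v (m + 1)) ^ (((L K / Lb L (m + 1) : ℕ) : ℝ)) := by
        rw [Real.rpow_sub hlamm]
        ring
      rw [mul_assoc, hcomb]
      ring
end DetMain
end KRSB

namespace KRSB

lemma dbs_range {N l : ℕ} (hl : 0 < l) (hlN : l ∣ N) (z : ℕ → ℝ) :
    ∑ i ∈ Finset.range N, ∑ t ∈ Finset.range N,
        (if i / l = t / l then z i * z t else 0)
      = ∑ b ∈ Finset.range (N / l), (bS z l b) ^ 2 := by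
  set n := N / l with hndef
  have hN : N = n * l := (Nat.div_mul_cancel hlN).symm
  rw [hN,
    sum_range_mul' (fun i => ∑ t ∈ Finset.range (n * l),
      if i / l = t / l then z i * z t else 0) n l]
  have hbr : ∀ b r, b ∈ Finset.range n → r < l →
      (∑ t ∈ Finset.range (n * l), (if (b * l + r) / l = t / l
          then z (b * l + r) * z t else 0))
        = z (b * l + r) * bS z l b := by
    intro b r hb hr
    have hdiv2 : ∀ bb rr, rr < l → (bb * l + rr) / l = bb := fun bb rr hrr => by
      rw [mul_comm bb l, Nat.mul_add_div hl, Nat.div_eq_of_lt hrr, add_zero]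
    have hdivbr : (b * l + r) / l = b := hdiv2 b r hr
    rw [sum_range_mul' (fun t => if (b * l + r) / l = t / l
      then z (b * l + r) * z t else 0) n l]
    have hinner : ∀ b', (∑ r' ∈ Finset.range l, if (b * l + r) / l = (b' * l + r') / l
        then z (b * l + r) * z (b' * l + r') else 0)
        = (if b = b' then z (b * l + r) * bS z l b' else 0) := by
      intro b'
      rw [Finset.sum_congr rfl (fun r' hr' => by
        rw [hdivbr, hdiv2 b' r' (Finset.mem_range.mp hr')])]
      by_cases hbb : b = b'
      · simp only [if_pos hbb, ← Finset.mul_sum]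
        rfl
      · simp [hbb]
    rw [Finset.sum_congr rfl (fun b' _ => hinner b'), Finset.sum_ite_eq, if_pos hb]
  rw [Finset.sum_congr rfl (fun b hb => Finset.sum_congr rfl
    (fun r hr => hbr b r hb (Finset.mem_range.mp hr)))]
  apply Finset.sum_congr rfl
  intro b _
  rw [← Finset.sum_mul, sq]
  rfl

lemma dbs {N l : ℕ} (hl : 0 < l) (hlN : l ∣ N) (z : ℕ → ℝ) :
    ∑ i : Fin N, ∑ t : Fin N, (if (i : ℕ) / l = (t : ℕ) / l
        then z (i : ℕ) * z (t : ℕ) else 0)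
      = ∑ b ∈ Finset.range (N / l), (bS z l b) ^ 2 := by
  rw [← dbs_range hl hlN z]
  calc ∑ i : Fin N, ∑ t : Fin N, (if (i : ℕ) / l = (t : ℕ) / l
          then z (i : ℕ) * z (t : ℕ) else 0)
      = ∑ i : Fin N, ∑ t ∈ Finset.range N, (if (i : ℕ) / l = t / l
          then z (i : ℕ) * z t else 0) :=
        Finset.sum_congr rfl (fun i _ => Fin.sum_univ_eq_sum_range
          (fun tv => if (i : ℕ) / l = tv / l then z (i : ℕ) * z tv else 0) N)
    _ = ∑ i ∈ Finset.range N, ∑ t ∈ Finset.range N,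
          (if i / l = t / l then z i * z t else 0) :=
        Fin.sum_univ_eq_sum_range (fun iv => ∑ t ∈ Finset.range N,
          (if iv / l = t / l then z iv * z t else 0)) N

section QuadMain
variable {K : ℕ} {L : ℕ → ℕ} {v : ℕ → ℝ}
  (hK : 0 < K)
  (hLpos : ∀ k, 1 ≤ k → k ≤ K → 0 < L k)
  (hchain : ∀ k, 1 ≤ k → k < K → L k ∣ L (k + 1))

lemma dot_mulVec {n : ℕ} (x : Fin n → ℝ) (M : Matrix (Fin n) (Fin n) ℝ) :
    x ⬝ᵥ M.mulVec x = ∑ i : Fin n, ∑ t : Fin n, x i * (M i t * x t) := by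
  simp [dotProduct, Matrix.mulVec, Finset.mul_sum]

include hK hLpos hchain in
lemma quadB (z : ℕ → ℝ) :
    (fun i : Fin (L K) => z (i : ℕ)) ⬝ᵥ
        (Bmat L v K K).mulVec (fun i : Fin (L K) => z (i : ℕ))
      = ∑ j ∈ Finset.range (K + 1), cB L v j * qq L K j z := by
  have hB : ∀ i t : Fin (L K), (Bmat L v K K) i t
      = ∑ j ∈ Finset.range (K + 1), cB L v j *
          (if (i : ℕ) / Lb L j = (t : ℕ) / Lb L j then ((Lb L j : ℝ))⁻¹ else 0) := by
    intro i t
    rw [Bmat, Matrix.sum_apply]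
    apply Finset.sum_congr rfl
    intro j _
    rw [Matrix.smul_apply, smul_eq_mul]
    rfl
  rw [dot_mulVec]
  calc ∑ i : Fin (L K), ∑ t : Fin (L K),
        z (i : ℕ) * ((Bmat L v K K) i t * z (t : ℕ))
      = ∑ i : Fin (L K), ∑ t : Fin (L K), ∑ j ∈ Finset.range (K + 1),
          cB L v j * ((Lb L j : ℝ))⁻¹ *
            (if (i : ℕ) / Lb L j = (t : ℕ) / Lb L j then z (i : ℕ) * z (t : ℕ) else 0) := by
        apply Finset.sum_congr rfl
        intro i _
        apply Finset.sum_congr rfl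
        intro t _
        rw [hB i t, Finset.sum_mul, Finset.mul_sum]
        apply Finset.sum_congr rfl
        intro j _
        split_ifs with h
        · ring
        · ring
    _ = ∑ j ∈ Finset.range (K + 1), ∑ i : Fin (L K), ∑ t : Fin (L K),
          cB L v j * ((Lb L j : ℝ))⁻¹ *
            (if (i : ℕ) / Lb L j = (t : ℕ) / Lb L j then z (i : ℕ) * z (t : ℕ) else 0) := by
        rw [Finset.sum_congr rfl (fun i (_ : i ∈ Finset.univ) => Finset.sum_comm)]
        exact Finset.sum_comm
    _ = ∑ j ∈ Finset.range (K + 1), cB L v j * ((Lb L j : ℝ))⁻¹ *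
          (∑ i : Fin (L K), ∑ t : Fin (L K),
            (if (i : ℕ) / Lb L j = (t : ℕ) / Lb L j then z (i : ℕ) * z (t : ℕ) else 0)) := by
        apply Finset.sum_congr rfl
        intro j _
        rw [Finset.mul_sum]
        apply Finset.sum_congr rfl
        intro i _
        rw [Finset.mul_sum]
    _ = ∑ j ∈ Finset.range (K + 1), cB L v j * qq L K j z := by
        apply Finset.sum_congr rfl
        intro j hj
        simp only [Finset.mem_range] at hj
        have hjK : j ≤ K := by omega
        rw [dbs (Lb_pos hLpos j hjK) (Lb_dvd_LK hK hLpos hchain j hjK) z,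
          qq_def, Lb_eq L hK]
        have hLbj : ((Lb L j : ℝ)) ≠ 0 := by
          have := Lb_pos hLpos j hjK
          positivity
        field_simp
end QuadMain
end KRSB

namespace KRSB
lemma abel (L : ℕ → ℕ) (v : ℕ → ℝ) (q : ℕ → ℝ) :
    ∀ m, ∑ j ∈ Finset.range (m + 1), cB L v j * q j
      = (∑ j ∈ Finset.range m, (lam L v j)⁻¹ * (q j - q (j + 1)))
        + (lam L v m)⁻¹ * q m := by
  intro m
  induction m with
  | zero => simp [cB]
  | succ n ih =>
      rw [Finset.sum_range_succ, ih, Finset.sum_range_succ]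
      show _ + ((lam L v (n + 1))⁻¹ - (lam L v n)⁻¹) * q (n + 1) = _
      ring

section ShiftMain
variable {K : ℕ} {L : ℕ → ℕ} {v : ℕ → ℝ}
  (hK : 0 < K)
  (hLpos : ∀ k, 1 ≤ k → k ≤ K → 0 < L k)
  (hchain : ∀ k, 1 ≤ k → k < K → L k ∣ L (k + 1))

include hK hLpos hchain in
lemma qq_shift {j : ℕ} (hjK : j ≤ K) (z : ℕ → ℝ) (μ : ℝ) :
    qq L K j (fun i => z i - μ)
      = qq L K j z - 2 * μ * (∑ i ∈ Finset.range (L K), z i) + μ ^ 2 * (L K) := by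
  have hl : 0 < Lb L j := Lb_pos hLpos j hjK
  have hlR : ((Lb L j : ℝ)) ≠ 0 := by positivity
  have hdvd : Lb L j ∣ L K := Lb_dvd_LK hK hLpos hchain j hjK
  have hnl : (L K / Lb L j) * Lb L j = L K := Nat.div_mul_cancel hdvd
  have hS : ∑ b ∈ Finset.range (L K / Lb L j), bS z (Lb L j) b
      = ∑ i ∈ Finset.range (L K), z i := by
    conv_rhs => rw [← hnl, sum_range_mul' z (L K / Lb L j) (Lb L j)]
    rfl
  have hbs : ∀ b, bS (fun i => z i - μ) (Lb L j) b = bS z (Lb L j) b - (Lb L j : ℝ) * μ := by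
    intro b
    rw [bS_def, bS_def, Finset.sum_sub_distrib, Finset.sum_const, Finset.card_range,
      nsmul_eq_mul]
  have hterm : ∀ b, (bS (fun i => z i - μ) (Lb L j) b) ^ 2
      = (bS z (Lb L j) b) ^ 2 - (2 * (Lb L j : ℝ) * μ) * (bS z (Lb L j) b)
        + ((Lb L j : ℝ)) ^ 2 * μ ^ 2 := by
    intro b
    rw [hbs b]
    ring
  rw [qq_def, qq_def, Lb_eq L hK,
    Finset.sum_congr rfl (fun b _ => hterm b), Finset.sum_add_distrib,
    Finset.sum_sub_distrib, ← Finset.mul_sum, hS, Finset.sum_const, Finset.card_range,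
    nsmul_eq_mul]
  have hcast : ((L K / Lb L j : ℕ) : ℝ) * ((Lb L j : ℝ)) = ((L K : ℕ) : ℝ) := by
    exact_mod_cast congrArg (Nat.cast (R := ℝ)) hnl
  rw [show μ ^ 2 * ((L K : ℕ) : ℝ) = μ ^ 2 * (((L K / Lb L j : ℕ) : ℝ) * ((Lb L j : ℝ)))
    from by rw [hcast]]
  field_simp

include hK hLpos hchain in
lemma rq_shift (z : ℕ → ℝ) (μ : ℝ) :
    rq L v K (fun i => z i - μ) = rq L v K z := by
  rw [rq, rq]
  apply Finset.sum_congr rfl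
  intro j hj
  simp only [Finset.mem_range] at hj
  rw [qq_shift hK hLpos hchain (by omega : j ≤ K) z μ,
    qq_shift hK hLpos hchain (by omega : j + 1 ≤ K) z μ]
  ring

end ShiftMain
end KRSB

open KRSB

/-- the recursive Gaussian smoothing `h_K` is the multivariate Gaussian
density with mean `μ·1` and covariance `Σ`. -/
theorem krsbSmooth_eq_gaussian (K : ℕ) (hK : 0 < K)
    (L : ℕ → ℕ)
    (hLpos : ∀ k, 1 ≤ k → k ≤ K → 0 < L k)
    (hchain : ∀ k, 1 ≤ k → k < K → L k ∣ L (k + 1))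
    (v : ℕ → ℝ) (hv : ∀ k, k ≤ K → 0 < v k)
    (μ : ℝ) (x : ℕ → ℝ) :
    krsbSmooth L v K x μ =
      (2 * Real.pi) ^ (-(L K : ℝ) / 2) * (krsbCov K L v).det ^ (-(1 : ℝ) / 2) *
        Real.exp (-(1 / 2) *
          ((fun i : Fin (L K) => x i - μ) ⬝ᵥ
            ((krsbCov K L v)⁻¹).mulVec (fun i : Fin (L K) => x i - μ))) := by
  have hN : 0 < L K := hLpos K hK le_rfl
  have hNR : (0:ℝ) < (L K : ℝ) := by exact_mod_cast hN
  have hlamK : 0 < lam L v K := lam_pos hLpos hv K le_rfl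
  have hLbK : Lb L K = L K := Lb_eq L hK
  set S : ℝ := ∑ i ∈ Finset.range (L K), x i with hS
  have hdet : (krsbCov K L v).det
      = (∏ j ∈ Finset.range K, (lam L v j) ^
          (((L K / Lb L j : ℕ) : ℝ) - ((L K / Lb L (j + 1) : ℕ) : ℝ)))
        * (lam L v K) ^ (((L K / Lb L K : ℕ) : ℝ)) := by
    rw [cov_eq hK hLpos]
    exact detT hK hLpos hchain hv K le_rfl
  have hinv : (krsbCov K L v)⁻¹ = Bmat L v K K := by
    apply Matrix.inv_eq_right_inv
    rw [cov_eq hK hLpos]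
    exact TB hK hLpos hchain hv K le_rfl
  have hsum0 : ∑ i ∈ Finset.range (L K), (x (0 * L K + i) - μ) = S - L K * μ := by
    rw [Finset.sum_sub_distrib, Finset.sum_const, Finset.card_range, nsmul_eq_mul]
    congr 1
    apply Finset.sum_congr rfl
    intro i _
    rw [zero_mul, zero_add]
  have hqKK : qq L K K (fun i => x i - μ) = (S - L K * μ) ^ 2 / L K := by
    rw [qq_def, Lb_eq L hK, Nat.div_self hN, Finset.sum_range_one, bS_def, hsum0]
  have hQF : ((fun i : Fin (L K) => x (i : ℕ) - μ) ⬝ᵥ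
        ((krsbCov K L v)⁻¹).mulVec (fun i : Fin (L K) => x (i : ℕ) - μ))
      = rq L v K x + (lam L v K)⁻¹ * ((S - L K * μ) ^ 2 / L K) := by
    rw [hinv]
    calc (fun i : Fin (L K) => x (i : ℕ) - μ) ⬝ᵥ
          (Bmat L v K K).mulVec (fun i : Fin (L K) => x (i : ℕ) - μ)
        = (fun i : Fin (L K) => (fun t => x t - μ) (i : ℕ)) ⬝ᵥ
          (Bmat L v K K).mulVec (fun i : Fin (L K) => (fun t => x t - μ) (i : ℕ)) := rfl
      _ = ∑ j ∈ Finset.range (K + 1), cB L v j * qq L K j (fun t => x t - μ) :=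
          quadB hK hLpos hchain (fun t => x t - μ)
      _ = (∑ j ∈ Finset.range K, (lam L v j)⁻¹ *
            (qq L K j (fun t => x t - μ) - qq L K (j + 1) (fun t => x t - μ)))
          + (lam L v K)⁻¹ * qq L K K (fun t => x t - μ) :=
          abel L v (fun j => qq L K j (fun t => x t - μ)) K
      _ = rq L v K (fun t => x t - μ) + (lam L v K)⁻¹ * qq L K K (fun t => x t - μ) := rfl
      _ = rq L v K x + (lam L v K)⁻¹ * ((S - L K * μ) ^ 2 / L K) := by
          rw [rq_shift hK hLpos hchain x μ, hqKK]
  rw [krsbSmooth_eq hLpos hchain hv K hK le_rfl x μ, hQF, hdet]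
  rw [show (-(1/2 : ℝ) * (rq L v K x + (lam L v K)⁻¹ * ((S - L K * μ) ^ 2 / L K)))
      = (-(1/2) * rq L v K x)
        + (-(1/2) * ((lam L v K)⁻¹ * ((S - L K * μ) ^ 2 / L K))) from by ring,
    Real.exp_add]
  have havg : avg L K x = S / L K := by rw [avg, hLbK]
  rw [gaussPdf, havg]
  have hexp2 : -(S / (L K : ℝ) - μ) ^ 2 / (2 * (lam L v K / (Lb L K : ℝ)))
      = -(1/2) * ((lam L v K)⁻¹ * ((S - L K * μ) ^ 2 / L K)) := by
    rw [hLbK]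
    field_simp
  rw [hexp2]
  have hconst : gc L v K * (Real.sqrt (2 * π * (lam L v K / (Lb L K : ℝ))))⁻¹
      = (2 * π) ^ (-(L K : ℝ) / 2)
        * ((∏ j ∈ Finset.range K, (lam L v j) ^
            (((L K / Lb L j : ℕ) : ℝ) - ((L K / Lb L (j + 1) : ℕ) : ℝ)))
          * (lam L v K) ^ (((L K / Lb L K : ℕ) : ℝ))) ^ (-(1:ℝ)/2) := by
    have h2π : (0:ℝ) < 2 * π := by positivity
    have hlamj : ∀ j ∈ Finset.range K, 0 < lam L v j := fun j hj =>
      lam_pos hLpos hv j (le_of_lt (Finset.mem_range.mp hj))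
    have hprodpos : 0 < ∏ j ∈ Finset.range K, (lam L v j) ^
        (((L K / Lb L j : ℕ) : ℝ) - ((L K / Lb L (j + 1) : ℕ) : ℝ)) :=
      Finset.prod_pos (fun j hj => Real.rpow_pos_of_pos (hlamj j hj) _)
    have hKK : (L K / Lb L K : ℕ) = 1 := by rw [hLbK]; exact Nat.div_self hN
    rw [hKK, Nat.cast_one, Real.rpow_one]
    have hDpos : 0 < (∏ j ∈ Finset.range K, (lam L v j) ^
        (((L K / Lb L j : ℕ) : ℝ) - ((L K / Lb L (j + 1) : ℕ) : ℝ))) * lam L v K :=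
      mul_pos hprodpos hlamK
    rw [gc_exp hLpos hv K le_rfl, hLbK]
    rw [sqrt_inv_eq_rpow (by positivity : (0:ℝ) < 2 * π * (lam L v K / (L K : ℝ))),
      Real.rpow_def_of_pos (by positivity), Real.rpow_def_of_pos h2π,
      Real.rpow_def_of_pos hDpos, ← Real.exp_add, ← Real.exp_add]
    congr 1
    have hlogD : Real.log ((∏ j ∈ Finset.range K, (lam L v j) ^
          (((L K / Lb L j : ℕ) : ℝ) - ((L K / Lb L (j + 1) : ℕ) : ℝ))) * lam L v K)
        = (∑ j ∈ Finset.range K,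
            (((L K / Lb L j : ℕ) : ℝ) - ((L K / Lb L (j + 1) : ℕ) : ℝ)) * Real.log (lam L v j))
          + Real.log (lam L v K) := by
      rw [Real.log_mul hprodpos.ne' hlamK.ne', Real.log_prod
        (fun j hj => (Real.rpow_pos_of_pos (hlamj j hj) _).ne')]
      congr 1
      exact Finset.sum_congr rfl fun j hj => Real.log_rpow (hlamj j hj) _
    have hlogm : Real.log (2 * π * (lam L v K / (L K : ℝ)))
        = Real.log (2 * π) + Real.log (lam L v K) - Real.log ((L K : ℝ)) := by
      rw [Real.log_mul h2π.ne' (by positivity), Real.log_div hlamK.ne' hNR.ne']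
      ring
    have hsfold : ∑ j ∈ Finset.range K, Real.log (lam L v j) *
          (-((((L K / Lb L j : ℕ) : ℝ)) - (((L K / Lb L (j + 1) : ℕ) : ℝ))) / 2)
        = (∑ j ∈ Finset.range K,
            ((((L K / Lb L j : ℕ) : ℝ)) - (((L K / Lb L (j + 1) : ℕ) : ℝ)))
              * Real.log (lam L v j)) * (-(1:ℝ)/2) := by
      rw [Finset.sum_mul]
      exact Finset.sum_congr rfl fun j _ => by ring
    rw [hlogD, hlogm, hsfold]
    ring
  calc gc L v K * Real.exp (-(1/2) * rq L v K x)
        * ((Real.sqrt (2 * π * (lam L v K / (Lb L K : ℝ))))⁻¹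
          * Real.exp (-(1/2) * ((lam L v K)⁻¹ * ((S - L K * μ) ^ 2 / L K))))
      = (gc L v K * (Real.sqrt (2 * π * (lam L v K / (Lb L K : ℝ))))⁻¹)
        * Real.exp (-(1/2) * rq L v K x)
        * Real.exp (-(1/2) * ((lam L v K)⁻¹ * ((S - L K * μ) ^ 2 / L K))) := by ring
    _ = _ := by rw [hconst]; ring
end

section
/- Let v_0 > 0, v_1 > 0, a ≥ 0, L > 0, and μ ∈ ℝ. Then ∫_ℝ φ(m; μ, v_1) · exp(−L·(a − |m|)²/(2v_0)) dm = √(v_0/(v_0 + L·v_1)) · [ exp(−L·(μ − a)²/(2(v_0 + L·v_1))) · Φ((L·v_1·a + v_0·μ)/√(v_0·v_1·(v_0 + L·v_1))) + exp(−L·(μ + a)²/(2(v_0 + L·v_1))) · Φ((L·v_1·a − v_0·μ)/√(v_0·v_1·(v_0 + L·v_1))) ]. -/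
open MeasureTheory Real

/-- The standard normal cumulative distribution function
`Φ(t) = ∫_{−∞}^{t} (2π)^{−1/2}·exp(−s²/2) ds`. -/
noncomputable def stdNormCDF (t : ℝ) : ℝ :=
  ∫ s in Set.Iic t, (Real.sqrt (2 * Real.pi))⁻¹ * Real.exp (-s ^ 2 / 2)

open Set

lemma integral_comp_add_right_Iic' (f : ℝ → ℝ) (c d : ℝ) :
    (∫ x in Iic c, f (x + d)) = ∫ x in Iic (c + d), f x := by
  have A : MeasurableEmbedding fun x : ℝ => x + d :=
    (Homeomorph.addRight d).isClosedEmbedding.measurableEmbedding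
  have h := A.setIntegral_map (μ := volume) f (Iic (c + d))
  rw [map_add_right_eq_self] at h
  have hs : (fun x : ℝ => x + d) ⁻¹' Iic (c + d) = Iic c := by ext x; simp
  rw [hs] at h
  exact h.symm

lemma gauss_Ioi' (V mb : ℝ) (hV : 0 < V) :
    ∫ m in Ioi (0:ℝ), (Real.sqrt (2 * π * V))⁻¹ * Real.exp (-(m - mb) ^ 2 / (2 * V)) =
      stdNormCDF (mb / Real.sqrt V) := by
  set σ := Real.sqrt V with hσdef
  have hσ : 0 < σ := Real.sqrt_pos.mpr hV
  have hσ2 : σ ^ 2 = V := Real.sq_sqrt hV.le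
  set φ : ℝ → ℝ := fun m => (Real.sqrt (2 * π * V))⁻¹ * Real.exp (-(m - mb) ^ 2 / (2 * V)) with hφ
  set g : ℝ → ℝ := fun y => (Real.sqrt (2 * π * V))⁻¹ * Real.exp (-y ^ 2 / (2 * V)) with hg
  set h : ℝ → ℝ := fun s => (Real.sqrt (2 * π * V))⁻¹ * Real.exp (-s ^ 2 / 2) with hh
  set p : ℝ → ℝ := fun s => (Real.sqrt (2 * π))⁻¹ * Real.exp (-s ^ 2 / 2) with hp
  have step1 : (∫ m in Ioi (0:ℝ), φ m) = ∫ x in Iic (0:ℝ), φ (-x) := by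
    have := integral_comp_neg_Iic (0:ℝ) φ
    rw [neg_zero] at this
    exact this.symm
  have step2 : (fun x : ℝ => φ (-x)) = fun x => g (x + mb) := by
    funext x
    simp only [hφ, hg]
    congr 2
    ring
  have step4 : (∫ y in Iic mb, g y) = ∫ x in Ioi (-mb), g (-x) := by
    have := integral_comp_neg_Ioi (-mb) g
    rw [neg_neg] at this
    exact this.symm
  have step5 : (fun x : ℝ => g (-x)) = fun x => h (σ⁻¹ * x) := by
    funext x
    simp only [hg, hh]
    congr 1
    have hx : (σ⁻¹ * x) ^ 2 = x ^ 2 / V := by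
      rw [mul_pow, ← hσ2]; field_simp
    rw [hx, neg_sq]; ring
  have step6 : (∫ x in Ioi (-mb), h (σ⁻¹ * x)) = σ * ∫ s in Ioi (σ⁻¹ * -mb), h s := by
    rw [integral_comp_mul_left_Ioi h (-mb) (inv_pos.mpr hσ), inv_inv, smul_eq_mul]
  have hsqrt : Real.sqrt (2 * π * V) = Real.sqrt (2 * π) * σ := by
    rw [hσdef, Real.sqrt_mul (by positivity)]
  have step7 : σ * (∫ s in Ioi (σ⁻¹ * -mb), h s) = ∫ s in Ioi (-(mb / σ)), p s := by
    have harg : σ⁻¹ * -mb = -(mb / σ) := by field_simp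
    rw [harg, hh, hp, integral_const_mul, integral_const_mul, ← mul_assoc]
    congr 1
    rw [hsqrt, mul_inv]
    field_simp
  have step8 : (∫ s in Ioi (-(mb / σ)), p s) = stdNormCDF (mb / σ) := by
    have := integral_comp_neg_Iic (mb / σ) p
    rw [stdNormCDF]
    rw [← this]
    congr 1
    funext s
    simp only [hp, neg_neg, even_two.neg_pow]
  calc (∫ m in Ioi (0:ℝ), φ m) = ∫ x in Iic (0:ℝ), φ (-x) := step1
    _ = ∫ x in Iic (0:ℝ), g (x + mb) := by rw [step2]
    _ = ∫ y in Iic (0 + mb), g y := integral_comp_add_right_Iic' g 0 mb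
    _ = ∫ y in Iic mb, g y := by rw [zero_add]
    _ = ∫ x in Ioi (-mb), g (-x) := step4
    _ = ∫ x in Ioi (-mb), h (σ⁻¹ * x) := by rw [step5]
    _ = σ * ∫ s in Ioi (σ⁻¹ * -mb), h s := step6
    _ = ∫ s in Ioi (-(mb / σ)), p s := step7
    _ = stdNormCDF (mb / σ) := step8

lemma half_integral' (v0 v1 a L μ : ℝ) (hv0 : 0 < v0) (hv1 : 0 < v1) (hL : 0 < L) :
    ∫ m in Ioi (0:ℝ), gaussPdf m μ v1 * Real.exp (-L * (a - m) ^ 2 / (2 * v0)) =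
      Real.sqrt (v0 / (v0 + L * v1)) * (Real.exp (-L * (μ - a) ^ 2 / (2 * (v0 + L * v1))) *
        stdNormCDF ((L * v1 * a + v0 * μ) / Real.sqrt (v0 * v1 * (v0 + L * v1)))) := by
  have hD : (0:ℝ) < v0 + L * v1 := by positivity
  set D := v0 + L * v1 with hDdef
  have hV : (0:ℝ) < v0 * v1 / D := by positivity
  set V := v0 * v1 / D with hVdef
  set mb := (v0 * μ + L * v1 * a) / D with hmbdef
  have hpt : ∀ m : ℝ, gaussPdf m μ v1 * Real.exp (-L * (a - m) ^ 2 / (2 * v0)) =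
      (Real.sqrt (v0 / D) * Real.exp (-L * (μ - a) ^ 2 / (2 * D))) *
        ((Real.sqrt (2 * π * V))⁻¹ * Real.exp (-(m - mb) ^ 2 / (2 * V))) := by
    intro m
    rw [gaussPdf]
    have hsq : (Real.sqrt (2 * π * v1))⁻¹ = Real.sqrt (v0 / D) * (Real.sqrt (2 * π * V))⁻¹ := by
      rw [← Real.sqrt_inv, ← Real.sqrt_inv, ← Real.sqrt_mul (by positivity)]
      congr 1
      rw [hVdef]
      field_simp
    have hexp : Real.exp (-(m - μ) ^ 2 / (2 * v1)) * Real.exp (-L * (a - m) ^ 2 / (2 * v0)) =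
        Real.exp (-L * (μ - a) ^ 2 / (2 * D)) * Real.exp (-(m - mb) ^ 2 / (2 * V)) := by
      rw [← Real.exp_add, ← Real.exp_add]
      congr 1
      rw [hVdef, hmbdef, hDdef]
      field_simp
      ring
    calc (Real.sqrt (2 * π * v1))⁻¹ * Real.exp (-(m - μ) ^ 2 / (2 * v1)) *
          Real.exp (-L * (a - m) ^ 2 / (2 * v0))
        = (Real.sqrt (2 * π * v1))⁻¹ * (Real.exp (-(m - μ) ^ 2 / (2 * v1)) *
            Real.exp (-L * (a - m) ^ 2 / (2 * v0))) := by ring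
      _ = _ := by rw [hsq, hexp]; ring
  have harg : mb / Real.sqrt V = (L * v1 * a + v0 * μ) / Real.sqrt (v0 * v1 * D) := by
    have hDσ : Real.sqrt (v0 * v1 * D) = D * Real.sqrt V := by
      rw [hVdef, ← Real.sqrt_sq hD.le, ← Real.sqrt_mul (by positivity)]
      congr 1
      field_simp
      ring
      rw [Real.sq_sqrt (sq_nonneg D)]
    rw [hDσ, hmbdef]
    rw [div_div]
    congr 1
    ring
  calc ∫ m in Ioi (0:ℝ), gaussPdf m μ v1 * Real.exp (-L * (a - m) ^ 2 / (2 * v0))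
      = ∫ m in Ioi (0:ℝ), (Real.sqrt (v0 / D) * Real.exp (-L * (μ - a) ^ 2 / (2 * D))) *
          ((Real.sqrt (2 * π * V))⁻¹ * Real.exp (-(m - mb) ^ 2 / (2 * V))) :=
        setIntegral_congr_fun measurableSet_Ioi fun m _ => hpt m
    _ = (Real.sqrt (v0 / D) * Real.exp (-L * (μ - a) ^ 2 / (2 * D))) *
          ∫ m in Ioi (0:ℝ), (Real.sqrt (2 * π * V))⁻¹ * Real.exp (-(m - mb) ^ 2 / (2 * V)) :=
        integral_const_mul _ _
    _ = _ := by rw [gauss_Ioi' V mb hV, harg, mul_assoc]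

/-- the Gaussian integral of `exp(−L(a − |m|)²/(2v₀))`. -/
theorem gaussian_integral_folded_abs (v0 v1 a L μ : ℝ)
    (hv0 : 0 < v0) (hv1 : 0 < v1) (ha : 0 ≤ a) (hL : 0 < L) :
    ∫ m : ℝ, gaussPdf m μ v1 * Real.exp (-L * (a - |m|) ^ 2 / (2 * v0)) =
      Real.sqrt (v0 / (v0 + L * v1)) *
        (Real.exp (-L * (μ - a) ^ 2 / (2 * (v0 + L * v1))) *
            stdNormCDF ((L * v1 * a + v0 * μ) / Real.sqrt (v0 * v1 * (v0 + L * v1))) +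
          Real.exp (-L * (μ + a) ^ 2 / (2 * (v0 + L * v1))) *
            stdNormCDF ((L * v1 * a - v0 * μ) / Real.sqrt (v0 * v1 * (v0 + L * v1)))) := by
  set f : ℝ → ℝ := fun m => gaussPdf m μ v1 * Real.exp (-L * (a - |m|) ^ 2 / (2 * v0)) with hf
  have h3 : Integrable (fun m : ℝ => gaussPdf m μ v1) := by
    have h2 := (integrable_exp_neg_mul_sq (show (0:ℝ) < (2 * v1)⁻¹ by positivity)).comp_sub_right μ
    have h4 := h2.const_mul (Real.sqrt (2 * π * v1))⁻¹
    exact h4.congr (Filter.Eventually.of_forall fun m => by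
      simp only [gaussPdf]; congr 1; ring)
  have hint : Integrable f := by
    have hmeas : AEStronglyMeasurable (fun m : ℝ => Real.exp (-L * (a - |m|) ^ 2 / (2 * v0)))
        (volume : Measure ℝ) := by
      apply Continuous.aestronglyMeasurable
      fun_prop
    have hbdd : ∃ C, ∀ m : ℝ, ‖Real.exp (-L * (a - |m|) ^ 2 / (2 * v0))‖ ≤ C := by
      refine ⟨1, fun m => ?_⟩
      rw [Real.norm_eq_abs, abs_of_pos (Real.exp_pos _)]
      apply Real.exp_le_one_iff.mpr
      apply div_nonpos_of_nonpos_of_nonneg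
      · nlinarith [sq_nonneg (a - |m|)]
      · positivity
    have := Integrable.bdd_mul h3 hmeas (Filter.Eventually.of_forall hbdd.choose_spec)
    exact this.congr (Filter.Eventually.of_forall fun m => by rw [hf]; ring)
  have hsplit := intervalIntegral.integral_Iic_add_Ioi (b := (0:ℝ)) hint.integrableOn hint.integrableOn
  have hIoi : (∫ m in Ioi (0:ℝ), f m) =
      ∫ m in Ioi (0:ℝ), gaussPdf m μ v1 * Real.exp (-L * (a - m) ^ 2 / (2 * v0)) := by
    refine setIntegral_congr_fun measurableSet_Ioi fun m hm => ?_
    rw [hf]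
    simp only
    rw [abs_of_pos hm]
  have hIic : (∫ m in Iic (0:ℝ), f m) =
      ∫ m in Ioi (0:ℝ), gaussPdf m (-μ) v1 * Real.exp (-L * (a - m) ^ 2 / (2 * v0)) := by
    have hcong : (∫ m in Iic (0:ℝ), f m) =
        ∫ m in Iic (0:ℝ),
          (fun s => gaussPdf s (-μ) v1 * Real.exp (-L * (a - s) ^ 2 / (2 * v0))) (-m) := by
      refine setIntegral_congr_fun measurableSet_Iic fun m hm => ?_
      simp only [hf, gaussPdf]
      rw [abs_of_nonpos hm]
      congr 2 <;> ring
    have h5 := integral_comp_neg_Iic (0:ℝ)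
      (fun s => gaussPdf s (-μ) v1 * Real.exp (-L * (a - s) ^ 2 / (2 * v0)))
    rw [neg_zero] at h5
    exact hcong.trans h5
  rw [← hsplit, hIic, hIoi, half_integral' v0 v1 a L μ hv0 hv1 hL,
    half_integral' v0 v1 a L (-μ) hv0 hv1 hL]
  have e3 : (-μ - a) ^ 2 = (μ + a) ^ 2 := by ring
  have e4 : L * v1 * a + v0 * -μ = L * v1 * a - v0 * μ := by ring
  rw [e3, e4]
  ring
end
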